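/- The map ζ intertwines the comultiplications of H and of A: as k-linear maps one has (Δ_H ⊗ id_A) ∘ ζ = (id_H ⊗ ζ) ∘ (ζ ⊗ id_H) ∘ (id_A ⊗ Δ_H) from A ⊗ H to H ⊗ H ⊗ A, and (id_H ⊗ Δ_A) ∘ ζ = (ζ ⊗ id_A) ∘ (id_A ⊗ ζ) ∘ (Δ_A ⊗ id_H) from A ⊗ H to H ⊗ A ⊗ A. -/
import Mathlib


open TensorProduct

noncomputable section

universe u

section helpers
variable {k : Type u} [CommRing k]
variable {M₁ M₂ M₃ N₁ N₂ N₃ W : Type u}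
  [AddCommMonoid M₁] [AddCommMonoid M₂] [AddCommMonoid M₃]
  [AddCommMonoid N₁] [AddCommMonoid N₂] [AddCommMonoid N₃] [AddCommMonoid W]
  [Module k M₁] [Module k M₂] [Module k M₃]
  [Module k N₁] [Module k N₂] [Module k N₃] [Module k W]

lemma map_map_comp' (f₂ : M₁ →ₗ[k] N₁) (g₂ : M₂ →ₗ[k] N₂) (f₁ : N₃ →ₗ[k] M₁)
    (g₁ : M₃ →ₗ[k] M₂) (r : W →ₗ[k] N₃ ⊗[k] M₃) :
    TensorProduct.map f₂ g₂ ∘ₗ TensorProduct.map f₁ g₁ ∘ₗ r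
      = TensorProduct.map (f₂ ∘ₗ f₁) (g₂ ∘ₗ g₁) ∘ₗ r := by
  rw [← LinearMap.comp_assoc, ← TensorProduct.map_comp]

lemma assoc_nat' (f : M₁ →ₗ[k] N₁) (g : M₂ →ₗ[k] N₂) (h : M₃ →ₗ[k] N₃)
    (r : W →ₗ[k] (M₁ ⊗[k] M₂) ⊗[k] M₃) :
    (TensorProduct.assoc k N₁ N₂ N₃).toLinearMap ∘ₗ
        TensorProduct.map (TensorProduct.map f g) h ∘ₗ r
      = TensorProduct.map f (TensorProduct.map g h) ∘ₗ
        (TensorProduct.assoc k M₁ M₂ M₃).toLinearMap ∘ₗ r := by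
  rw [← LinearMap.comp_assoc, ← TensorProduct.map_map_comp_assoc_eq, LinearMap.comp_assoc]

lemma assoc_symm_nat' (f : M₁ →ₗ[k] N₁) (g : M₂ →ₗ[k] N₂) (h : M₃ →ₗ[k] N₃)
    (r : W →ₗ[k] M₁ ⊗[k] (M₂ ⊗[k] M₃)) :
    (TensorProduct.assoc k N₁ N₂ N₃).symm.toLinearMap ∘ₗ
        TensorProduct.map f (TensorProduct.map g h) ∘ₗ r
      = TensorProduct.map (TensorProduct.map f g) h ∘ₗ
        (TensorProduct.assoc k M₁ M₂ M₃).symm.toLinearMap ∘ₗ r := by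
  rw [← LinearMap.comp_assoc, ← TensorProduct.map_map_comp_assoc_symm_eq, LinearMap.comp_assoc]

lemma symm_cancel' (e : M₁ ≃ₗ[k] N₁) (r : W →ₗ[k] M₁) :
    e.symm.toLinearMap ∘ₗ e.toLinearMap ∘ₗ r = r := by
  ext x; simp

lemma mapL' (f₂ : M₁ →ₗ[k] N₁) (f₁ : M₂ →ₗ[k] M₁) (g : M₃ →ₗ[k] N₂) :
    TensorProduct.map (f₂ ∘ₗ f₁) g
      = TensorProduct.map f₂ g ∘ₗ TensorProduct.map f₁ LinearMap.id := by
  rw [← TensorProduct.map_comp, LinearMap.comp_id]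

lemma mapR' (f : M₁ →ₗ[k] N₁) (g₂ : M₂ →ₗ[k] N₂) (g₁ : M₃ →ₗ[k] M₂) :
    TensorProduct.map f (g₂ ∘ₗ g₁)
      = TensorProduct.map f g₂ ∘ₗ TensorProduct.map LinearMap.id g₁ := by
  rw [← TensorProduct.map_comp, LinearMap.comp_id]
end helpers

variable {k A H X : Type u} [Field k]
  [Ring A] [Ring H] [Ring X]
  [Bialgebra k A] [Bialgebra k H] [Bialgebra k X]

/-- ζ := (p_H ⊗ p_A) ∘ Δ_X ∘ ξ⁻¹ : A ⊗ H → H ⊗ A. -/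
def zetaC (pA : X →ₐc[k] A) (pH : X →ₐc[k] H) (ξ : X ≃ₗ[k] A ⊗[k] H) :
    A ⊗[k] H →ₗ[k] H ⊗[k] A :=
  TensorProduct.map (pH : X →ₗ[k] H) (pA : X →ₗ[k] A) ∘ₗ
    (Coalgebra.comul : X →ₗ[k] X ⊗[k] X) ∘ₗ ξ.symm.toLinearMap

/-- ζ intertwines the comultiplications of H and A:
(Δ_H ⊗ id_A) ∘ ζ = (id_H ⊗ ζ) ∘ (ζ ⊗ id_H) ∘ (id_A ⊗ Δ_H) and
(id_H ⊗ Δ_A) ∘ ζ = (ζ ⊗ id_A) ∘ (id_A ⊗ ζ) ∘ (Δ_A ⊗ id_H)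
(with the canonical associators inserted). -/
theorem zetaC_comul (pA : X →ₐc[k] A) (pH : X →ₐc[k] H)
    (ξ : X ≃ₗ[k] A ⊗[k] H)
    (hξ : ∀ x : X, ξ x = TensorProduct.map (pA : X →ₗ[k] A) (pH : X →ₗ[k] H)
      (Coalgebra.comul x)) :
    TensorProduct.map (Coalgebra.comul : H →ₗ[k] H ⊗[k] H) LinearMap.id ∘ₗ
        zetaC pA pH ξ
      = (TensorProduct.assoc k H H A).symm.toLinearMap ∘ₗ
        TensorProduct.map LinearMap.id (zetaC pA pH ξ) ∘ₗ
        (TensorProduct.assoc k H A H).toLinearMap ∘ₗ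
        TensorProduct.map (zetaC pA pH ξ) LinearMap.id ∘ₗ
        (TensorProduct.assoc k A H H).symm.toLinearMap ∘ₗ
        TensorProduct.map LinearMap.id (Coalgebra.comul : H →ₗ[k] H ⊗[k] H) ∧
    TensorProduct.map LinearMap.id (Coalgebra.comul : A →ₗ[k] A ⊗[k] A) ∘ₗ
        zetaC pA pH ξ
      = (TensorProduct.assoc k H A A).toLinearMap ∘ₗ
        TensorProduct.map (zetaC pA pH ξ) LinearMap.id ∘ₗ
        (TensorProduct.assoc k A H A).symm.toLinearMap ∘ₗ
        TensorProduct.map LinearMap.id (zetaC pA pH ξ) ∘ₗ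
        (TensorProduct.assoc k A A H).toLinearMap ∘ₗ
        TensorProduct.map (Coalgebra.comul : A →ₗ[k] A ⊗[k] A) LinearMap.id := by
  set pa : X →ₗ[k] A := (pA : X →ₗ[k] A) with hpa
  set ph : X →ₗ[k] H := (pH : X →ₗ[k] H) with hph
  set dX : X →ₗ[k] X ⊗[k] X := (Coalgebra.comul : X →ₗ[k] X ⊗[k] X) with hdX
  set dA : A →ₗ[k] A ⊗[k] A := (Coalgebra.comul : A →ₗ[k] A ⊗[k] A) with hdA
  set dH : H →ₗ[k] H ⊗[k] H := (Coalgebra.comul : H →ₗ[k] H ⊗[k] H) with hdH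
  set z : A ⊗[k] H →ₗ[k] H ⊗[k] A := zetaC pA pH ξ with hz
  have hξL : ξ.toLinearMap = TensorProduct.map pa ph ∘ₗ dX := by
    ext x; simpa using hξ x
  have hζξ : z ∘ₗ ξ.toLinearMap = TensorProduct.map ph pa ∘ₗ dX := by
    ext x; simp [hz, zetaC, hpa, hph, hdX]
  have hζξ' : z ∘ₗ TensorProduct.map pa ph ∘ₗ dX = TensorProduct.map ph pa ∘ₗ dX := by
    rw [← hξL]; exact hζξ
  have hDH : dH ∘ₗ ph = TensorProduct.map ph ph ∘ₗ dX :=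
    (CoalgHomClass.map_comp_comul pH).symm
  have hDA : dA ∘ₗ pa = TensorProduct.map pa pa ∘ₗ dX :=
    (CoalgHomClass.map_comp_comul pA).symm
  have coX : TensorProduct.map LinearMap.id dX ∘ₗ dX
      = (TensorProduct.assoc k X X X).toLinearMap ∘ₗ
          TensorProduct.map dX LinearMap.id ∘ₗ dX :=
    Coalgebra.coassoc.symm
  have hsurj : Function.Surjective ξ.toLinearMap := ξ.surjective
  constructor
  · apply (LinearMap.cancel_right hsurj).mp
    simp only [LinearMap.comp_assoc]
    rw [hξL]
    -- left side
    conv_lhs =>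
      rw [hζξ']
      rw [map_map_comp']
      rw [LinearMap.id_comp]
      rw [hDH]
      rw [mapL']
      rw [LinearMap.comp_assoc]
    conv_rhs =>
      rw [map_map_comp' (r := dX)]
      rw [LinearMap.id_comp]
      rw [hDH]
      rw [mapR']
      rw [LinearMap.comp_assoc]
      rw [coX]
      rw [assoc_symm_nat']
      rw [symm_cancel']
      rw [map_map_comp']
      rw [map_map_comp']
      simp only [LinearMap.id_comp, LinearMap.comp_id, LinearMap.comp_assoc]
      rw [hζξ']
      rw [mapL']
      rw [LinearMap.comp_assoc]
      rw [assoc_nat']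
      rw [← coX]
      rw [map_map_comp']
      rw [map_map_comp']
      simp only [LinearMap.id_comp, LinearMap.comp_id, LinearMap.comp_assoc]
      rw [hζξ']
      rw [mapR']
      rw [LinearMap.comp_assoc]
      rw [coX]
      rw [assoc_symm_nat']
      rw [symm_cancel']
  · apply (LinearMap.cancel_right hsurj).mp
    simp only [LinearMap.comp_assoc]
    rw [hξL]
    -- left side
    conv_lhs =>
      rw [hζξ']
      rw [map_map_comp']
      rw [LinearMap.id_comp]
      rw [hDA]
      rw [mapR']
      rw [LinearMap.comp_assoc]
    conv_rhs =>
      rw [map_map_comp' (r := dX)]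
      rw [LinearMap.id_comp]
      rw [hDA]
      rw [mapL']
      rw [LinearMap.comp_assoc]
      rw [assoc_nat']
      rw [← coX]
      rw [map_map_comp']
      rw [map_map_comp']
      simp only [LinearMap.id_comp, LinearMap.comp_id, LinearMap.comp_assoc]
      rw [hζξ']
      rw [mapR']
      rw [LinearMap.comp_assoc]
      rw [coX]
      rw [assoc_symm_nat']
      rw [symm_cancel']
      rw [map_map_comp']
      rw [map_map_comp']
      simp only [LinearMap.id_comp, LinearMap.comp_id, LinearMap.comp_assoc]
      rw [hζξ']
      rw [mapL']
      rw [LinearMap.comp_assoc]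
      rw [assoc_nat']
      rw [← coX]
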